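/- A bounded domain Ω ⊂ ℝⁿ has the segment property if and only if Ω has C⁰ boundary (i.e., ∂Ω is locally the graph of a continuous function with Ω locally on one side). -/

import Mathlib

open Set Metric

/-- A bounded open set `Ω ⊆ ℝⁿ` has the segment property: for every `p ∈ ∂Ω` there are a
neighbourhood `U` of `p` and a vector `w` with `(closure Ω ∩ U) + t • w ⊆ Ω` for all
`0 < t < 1`. -/
def SegmentProperty {n : ℕ} (Ω : Set (EuclideanSpace ℝ (Fin n))) : Prop :=
  ∀ p ∈ frontier Ω, ∃ (U : Set (EuclideanSpace ℝ (Fin n))) (w : EuclideanSpace ℝ (Fin n)),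
    IsOpen U ∧ p ∈ U ∧
      ∀ z ∈ closure Ω ∩ U, ∀ t : ℝ, 0 < t → t < 1 → z + t • w ∈ Ω

/-- A bounded open set `Ω ⊆ ℝⁿ` has `C⁰` boundary: a finite cover of `∂Ω` by balls
`B(x_j, r_j)`, `x_j ∈ ∂Ω`, such that in suitable rotated coordinates (a linear isometry
onto `ℝ^{n-1} × ℝ` composed with a translation) `Ω ∩ B(x_j, 4r_j)` is the strict
supergraph of a continuous `φ_j : ℝ^{n-1} → ℝ`, and `∂Ω ∩ B(x_j, 4r_j)` is its graph. -/
def HasC0Boundary {n : ℕ} (Ω : Set (EuclideanSpace ℝ (Fin n))) : Prop :=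
  ∃ (m : ℕ) (x : Fin m → EuclideanSpace ℝ (Fin n)) (r : Fin m → ℝ),
    (∀ j, x j ∈ frontier Ω ∧ 0 < r j) ∧
    frontier Ω ⊆ ⋃ j, ball (x j) (r j) ∧
    ∀ j, ∃ (A : EuclideanSpace ℝ (Fin n) ≃ₗᵢ[ℝ]
          WithLp 2 (EuclideanSpace ℝ (Fin (n - 1)) × ℝ))
        (b : WithLp 2 (EuclideanSpace ℝ (Fin (n - 1)) × ℝ))
        (φ : EuclideanSpace ℝ (Fin (n - 1)) → ℝ),
      Continuous φ ∧
      Ω ∩ ball (x j) (4 * r j)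
        = {z | φ (WithLp.equiv 2 _ (A z + b)).1 < (WithLp.equiv 2 _ (A z + b)).2}
            ∩ ball (x j) (4 * r j) ∧
      frontier Ω ∩ ball (x j) (4 * r j)
        = {z | (WithLp.equiv 2 _ (A z + b)).2 = φ (WithLp.equiv 2 _ (A z + b)).1}
            ∩ ball (x j) (4 * r j)

/-!
Both directions are local and take place in coordinates `(y, s) ∈ ℝⁿ⁻¹ × ℝ`, rotated so that the
segment direction is vertical. If `Ω` is locally the supergraph `s > φ y`, then `closure Ω` is
locally `s ≥ φ y`, so short vertical segments starting in `closure Ω` go into `Ω`. Conversely, if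
vertical segments of length `c` starting in `closure Ω` near `p` go into `Ω`, then in a box of
height `< c` around `p` each vertical fibre of `closure Ω` is an interval `[φ y, b]` and that of
`Ω` is `(φ y, b]`, where `φ y` is the lowest point of `closure Ω` on the fibre. This `φ` is upper
semicontinuous because `Ω` is open, and lower semicontinuous because the complement of
`closure Ω` is open and the fibres are compact. Boundedness makes `∂Ω` compact, so finitely many
such boxes cover it.
-/

open Filter Topology

theorem exists_linearIsometryEquiv_apply_eq {E F : Type*} [NormedAddCommGroup E]
    [InnerProductSpace ℝ E] [FiniteDimensional ℝ E] [NormedAddCommGroup F]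
    [InnerProductSpace ℝ F] [FiniteDimensional ℝ F]
    (h : Module.finrank ℝ E = Module.finrank ℝ F) {u : E} {v : F} (huv : ‖u‖ = ‖v‖) :
    ∃ A : E ≃ₗᵢ[ℝ] F, A u = v := by
  let J : E ≃ₗᵢ[ℝ] F := ((stdOrthonormalBasis ℝ E).reindex (finCongr h)).repr.trans
    (stdOrthonormalBasis ℝ F).repr.symm
  exact ⟨J.trans (Submodule.reflection (ℝ ∙ (J u - v))ᗮ),
    Submodule.reflection_sub (by rw [J.norm_map, huv])⟩

theorem EuclideanSpace.exists_linearIsometryEquiv_apply_eq_vertical {n : ℕ}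
    {w : EuclideanSpace ℝ (Fin n)} (hw : w ≠ 0) :
    ∃ A : EuclideanSpace ℝ (Fin n) ≃ₗᵢ[ℝ] WithLp 2 (EuclideanSpace ℝ (Fin (n - 1)) × ℝ),
      A w = WithLp.toLp 2 (0, ‖w‖) := by
  have hn : 0 < n := by
    simpa using Module.finrank_pos_iff_exists_ne_zero (R := ℝ).2 ⟨w, hw⟩
  refine exists_linearIsometryEquiv_apply_eq ?_ (by simp)
  rw [(WithLp.linearEquiv 2 ℝ (EuclideanSpace ℝ (Fin (n - 1)) × ℝ)).finrank_eq,
    Module.finrank_prod, finrank_euclideanSpace_fin, finrank_euclideanSpace_fin,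
    Module.finrank_self]
  omega

section Chart

variable {E Y : Type*} [NormedAddCommGroup E] [NormedSpace ℝ E] [NormedAddCommGroup Y]
  [NormedSpace ℝ Y]

noncomputable def graphChart (A : E ≃ₗᵢ[ℝ] WithLp 2 (Y × ℝ)) (b : WithLp 2 (Y × ℝ)) :
    E ≃ₜ Y × ℝ :=
  (A.toHomeomorph.trans (Homeomorph.addRight b)).trans (WithLp.homeomorphProd 2 Y ℝ)

theorem graphChart_apply (A : E ≃ₗᵢ[ℝ] WithLp 2 (Y × ℝ)) (b : WithLp 2 (Y × ℝ)) (z : E) :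
    graphChart A b z = WithLp.equiv 2 _ (A z + b) :=
  rfl

theorem graphChart_add_smul {A : E ≃ₗᵢ[ℝ] WithLp 2 (Y × ℝ)} {w : E} {c : ℝ}
    (hw : A w = WithLp.toLp 2 (0, c)) (b : WithLp 2 (Y × ℝ)) (z : E) (t : ℝ) :
    graphChart A b (z + t • w) = ((graphChart A b z).1, (graphChart A b z).2 + t * c) := by
  rw [graphChart_apply, graphChart_apply, A.map_add, A.map_smul, hw]
  ext <;> simp [add_right_comm, mul_comm]

variable (Y) in
/-- `HasC0Boundary Ω` asks for this on each ball `B(x_j, 4 r_j)`, with `Y = ℝⁿ⁻¹`, up to unfolding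
`graphChart`. -/
def IsRotatedSupergraphOn (Ω B : Set E) : Prop :=
  ∃ (A : E ≃ₗᵢ[ℝ] WithLp 2 (Y × ℝ)) (b : WithLp 2 (Y × ℝ)) (φ : Y → ℝ), Continuous φ ∧
    Ω ∩ B = {z | φ (graphChart A b z).1 < (graphChart A b z).2} ∩ B ∧
    frontier Ω ∩ B = {z | (graphChart A b z).2 = φ (graphChart A b z).1} ∩ B

theorem IsRotatedSupergraphOn.mono {Ω B B' : Set E} (h : IsRotatedSupergraphOn Y Ω B)
    (hB : B' ⊆ B) : IsRotatedSupergraphOn Y Ω B' := by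
  obtain ⟨A, b, φ, hφ, hΩ, hfr⟩ := h
  refine ⟨A, b, φ, hφ, ?_, ?_⟩ <;>
    rw [← inter_eq_right.2 hB, ← inter_assoc, ← inter_assoc, ‹_ ∩ B = _›]

theorem IsRotatedSupergraphOn.exists_segment {Ω : Set E} {x : E} {r : ℝ}
    (h : IsRotatedSupergraphOn Y Ω (ball x (2 * r))) :
    ∃ w : E, ∀ z ∈ closure Ω ∩ ball x r, ∀ t : ℝ, 0 < t → t < 1 → z + t • w ∈ Ω := by
  obtain ⟨A, b, φ, -, hΩ, hfr⟩ := h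
  refine ⟨A.symm (WithLp.toLp 2 (0, r)), ?_⟩
  rintro z ⟨hzcl, hzx⟩ t ht0 ht1
  have hr : 0 < r := pos_of_mem_ball hzx
  have hz : z ∈ ball x (2 * r) := ball_subset_ball (by linarith) hzx
  have hle : φ (graphChart A b z).1 ≤ (graphChart A b z).2 := by
    rcases (closure_eq_self_union_frontier Ω ▸ hzcl : z ∈ Ω ∪ frontier Ω) with hzΩ | hzfr
    · exact (hΩ.subset ⟨hzΩ, hz⟩).1.le
    · exact (hfr.subset ⟨hzfr, hz⟩).1.ge
  have hball : z + t • A.symm (WithLp.toLp 2 (0, r)) ∈ ball x (2 * r) := by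
    rw [mem_ball] at hzx ⊢
    calc dist (z + t • A.symm (WithLp.toLp 2 (0, r))) x
        ≤ dist (z + t • A.symm (WithLp.toLp 2 (0, r))) z + dist z x := dist_triangle ..
      _ < r + r := by
        rw [dist_self_add_left]
        gcongr
        simp [norm_smul, abs_of_pos ht0, abs_of_pos hr]
        nlinarith
      _ = 2 * r := by ring
  refine (hΩ.superset ⟨?_, hball⟩).1
  rw [mem_ofPred_eq, graphChart_add_smul (A.apply_symm_apply _)]
  nlinarith

end Chart

theorem ContinuousOn.exists_continuous_eventuallyEq {X : Type*} [TopologicalSpace X]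
    [NormalSpace X] [RegularSpace X] {f : X → ℝ} {W : Set X} {x : X} (hf : ContinuousOn f W)
    (hW : W ∈ 𝓝 x) : ∃ g : X → ℝ, Continuous g ∧ g =ᶠ[𝓝 x] f := by
  obtain ⟨K, hK, hKc, hKW⟩ := exists_mem_nhds_isClosed_subset hW
  obtain ⟨g, hg⟩ :=
    ContinuousMap.exists_restrict_eq hKc ⟨K.domRestrict f, (hf.mono hKW).domRestrict⟩
  exact ⟨g, g.continuous, Filter.mem_of_superset hK fun y hy =>
    show g y = f y from DFunLike.congr_fun hg ⟨y, hy⟩⟩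

section UpwardBox

variable {Y : Type*} [TopologicalSpace Y]

structure UpwardBox (Ω : Set (Y × ℝ)) (W : Set Y) (a b : ℝ) : Prop where
  le : a ≤ b
  top_mem : ∀ y ∈ W, (y, b) ∈ Ω
  mem_of_mem_closure : ∀ y ∈ W, ∀ s ∈ Icc a b, (y, s) ∈ closure Ω → ∀ t ∈ Ioc s b, (y, t) ∈ Ω

noncomputable def boundaryHeight (Ω : Set (Y × ℝ)) (a b : ℝ) (y : Y) : ℝ :=
  sInf {s ∈ Icc a b | (y, s) ∈ closure Ω}

namespace UpwardBox

variable {Ω : Set (Y × ℝ)} {W : Set Y} {a b s : ℝ} {y : Y}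

theorem boundaryHeight_mem (h : UpwardBox Ω W a b) (hy : y ∈ W) :
    boundaryHeight Ω a b y ∈ {s ∈ Icc a b | (y, s) ∈ closure Ω} :=
  (isClosed_Icc.inter (isClosed_closure.preimage (Continuous.prodMk_right y))).csInf_mem
    ⟨b, ⟨h.le, le_rfl⟩, subset_closure (h.top_mem y hy)⟩ (bddBelow_Icc.mono inter_subset_left)

theorem mem_closure_iff (h : UpwardBox Ω W a b) (hy : y ∈ W) (hs : s ∈ Icc a b) :
    (y, s) ∈ closure Ω ↔ boundaryHeight Ω a b y ≤ s := by
  refine ⟨fun hcl => csInf_le (bddBelow_Icc.mono inter_subset_left) ⟨hs, hcl⟩, fun hle => ?_⟩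
  obtain ⟨hH, hHcl⟩ := h.boundaryHeight_mem hy
  rcases hle.eq_or_lt with heq | hlt
  · rwa [← heq]
  · exact subset_closure (h.mem_of_mem_closure y hy _ hH hHcl s ⟨hlt, hs.2⟩)

theorem mem_iff (h : UpwardBox Ω W a b) (hΩ : IsOpen Ω) (hy : y ∈ W) (hs : s ∈ Ioc a b) :
    (y, s) ∈ Ω ↔ boundaryHeight Ω a b y < s := by
  obtain ⟨hH, hHcl⟩ := h.boundaryHeight_mem hy
  refine ⟨fun hmem => ?_, fun hlt => h.mem_of_mem_closure y hy _ hH hHcl s ⟨hlt, hs.2⟩⟩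
  have hbelow : ∀ᶠ s' in 𝓝[<] s, (y, s') ∈ Ω ∧ a < s' :=
    nhdsWithin_le_nhds <| ((Continuous.prodMk_right y).continuousAt.eventually_mem
      (hΩ.mem_nhds hmem)).and (lt_mem_nhds hs.1)
  obtain ⟨s', ⟨hs'Ω, has'⟩, hs's⟩ := (hbelow.and self_mem_nhdsWithin).exists
  calc boundaryHeight Ω a b y
      ≤ s' := (h.mem_closure_iff hy ⟨has'.le, hs's.le.trans hs.2⟩).1 (subset_closure hs'Ω)
    _ < s := hs's

theorem continuousAt_boundaryHeight (h : UpwardBox Ω W a b) (hΩ : IsOpen Ω) (hW : W ∈ 𝓝 y) :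
    ContinuousAt (boundaryHeight Ω a b) y := by
  have hy := mem_of_mem_nhds hW
  obtain ⟨⟨hHa, hHb⟩, -⟩ := h.boundaryHeight_mem hy
  refine tendsto_order.2 ⟨fun l hl => ?_, fun u hu => ?_⟩
  · rcases lt_or_ge l a with hla | hal
    · filter_upwards [hW] with y' hy' using hla.trans_le (h.boundaryHeight_mem hy').1.1
    have hfree : ∀ s ∈ Icc a l, ∀ᶠ q : Y × ℝ in 𝓝 (y, s), (q.1, q.2) ∉ closure Ω := fun s hs =>
      isClosed_closure.isOpen_compl.mem_nhds fun hcl =>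
        ((h.mem_closure_iff hy ⟨hs.1, hs.2.trans (hl.le.trans hHb)⟩).1 hcl).not_gt
          (hs.2.trans_lt hl)
    filter_upwards [hW, isCompact_Icc.eventually_forall_of_forall_eventually
      (P := fun y' s => (y', s) ∉ closure Ω) hfree] with y' hy' hfree'
    obtain ⟨⟨hH'a, -⟩, hH'cl⟩ := h.boundaryHeight_mem hy'
    by_contra! hle
    exact hfree' _ ⟨hH'a, hle⟩ hH'cl
  · rcases lt_or_ge b u with hbu | hub
    · filter_upwards [hW] with y' hy' using (h.boundaryHeight_mem hy').1.2.trans_lt hbu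
    have hu' : u ∈ Ioc a b := ⟨hHa.trans_lt hu, hub⟩
    have hΩu : ∀ᶠ y' in 𝓝 y, (y', u) ∈ Ω :=
      (Continuous.prodMk_left u).continuousAt.eventually_mem
        (hΩ.mem_nhds ((h.mem_iff hΩ hy hu').2 hu))
    filter_upwards [hW, hΩu] with y' hy' hmem using (h.mem_iff hΩ hy' hu').1 hmem

theorem exists_continuous_supergraph [NormalSpace Y] [RegularSpace Y] (h : UpwardBox Ω W a b)
    (hΩ : IsOpen Ω) {y₀ : Y} {s₀ : ℝ} (hW : W ∈ 𝓝 y₀) (hs₀ : s₀ ∈ Ioo a b) :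
    ∃ φ : Y → ℝ, Continuous φ ∧ ∃ V ∈ 𝓝 (y₀, s₀),
      Ω ∩ V = {z | φ z.1 < z.2} ∩ V ∧ frontier Ω ∩ V = {z | z.2 = φ z.1} ∩ V := by
  have hcont : ContinuousOn (boundaryHeight Ω a b) (interior W) := fun y hy =>
    (h.continuousAt_boundaryHeight hΩ (mem_interior_iff_mem_nhds.1 hy)).continuousWithinAt
  obtain ⟨φ, hφ, hφeq⟩ := hcont.exists_continuous_eventuallyEq (interior_mem_nhds.2 hW)
  refine ⟨φ, hφ, (W ∩ {y | φ y = boundaryHeight Ω a b y}) ×ˢ Ioc a b,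
    prod_mem_nhds (inter_mem hW hφeq) (Ioc_mem_nhds hs₀.1 hs₀.2), ?_, ?_⟩
  · ext ⟨y, s⟩
    refine and_congr_left fun ⟨⟨hy, hφy⟩, hs⟩ => ?_
    rw [mem_ofPred_eq, hφy]
    exact h.mem_iff hΩ hy hs
  · ext ⟨y, s⟩
    refine and_congr_left fun ⟨⟨hy, hφy⟩, hs⟩ => ?_
    rw [hΩ.frontier_eq, Set.mem_sdiff, mem_ofPred_eq, hφy,
      h.mem_closure_iff hy (Ioc_subset_Icc_self hs), h.mem_iff hΩ hy hs, not_lt, eq_comm]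
    exact le_antisymm_iff.symm

end UpwardBox

theorem exists_upwardBox {Ω : Set (Y × ℝ)} (hΩ : IsOpen Ω) {y₀ : Y} {s₀ : ℝ}
    (hp : (y₀, s₀) ∈ closure Ω) {U : Set (Y × ℝ)} (hU : U ∈ 𝓝 (y₀, s₀)) {c : ℝ} (hc : 0 < c)
    (hseg : ∀ z ∈ closure Ω ∩ U, ∀ τ : ℝ, 0 < τ → τ < c → (z.1, z.2 + τ) ∈ Ω) :
    ∃ W ∈ 𝓝 y₀, ∃ a b, s₀ ∈ Ioo a b ∧ UpwardBox Ω W a b := by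
  obtain ⟨u, hu, v, hv, huv⟩ := mem_nhds_prod_iff.1 hU
  obtain ⟨ε, hε, hεv⟩ := Metric.mem_nhds_iff.1 hv
  set δ := min (ε / 2) (c / 3)
  have hδ : 0 < δ := by positivity
  have hδε : δ < ε := (min_le_left _ _).trans_lt (by linarith)
  have hδc : δ < c := (min_le_right _ _).trans_lt (by linarith)
  have htop : (y₀, s₀ + δ) ∈ Ω := hseg _ ⟨hp, mem_of_mem_nhds hU⟩ δ hδ hδc
  have hbox : ∀ y ∈ u, ∀ s ∈ Icc (s₀ - δ) (s₀ + δ), (y, s) ∈ U := fun y hy s hs =>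
    huv ⟨hy, hεv (by rw [Real.ball_eq_Ioo]; constructor <;> linarith [hs.1, hs.2])⟩
  refine ⟨u ∩ {y | (y, s₀ + δ) ∈ Ω},
    inter_mem hu ((Continuous.prodMk_left _).continuousAt.eventually_mem (hΩ.mem_nhds htop)),
    s₀ - δ, s₀ + δ, ⟨by linarith, by linarith⟩, ⟨by linarith, fun y hy => hy.2, ?_⟩⟩
  intro y hy s hs hcl t ht
  simpa using hseg (y, s) ⟨hcl, hbox y hy.1 s hs⟩ (t - s) (by linarith [ht.1])
    (by linarith [ht.2, hs.1, min_le_right (ε / 2) (c / 3)])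

end UpwardBox

theorem exists_isRotatedSupergraphOn_nhds {E Y : Type*} [NormedAddCommGroup E] [NormedSpace ℝ E]
    [NormedAddCommGroup Y] [NormedSpace ℝ Y] {Ω : Set E} (hΩ : IsOpen Ω) {p : E}
    (hp : p ∈ closure Ω) {U : Set E} (hU : U ∈ 𝓝 p) {w : E}
    (hseg : ∀ z ∈ closure Ω ∩ U, ∀ t : ℝ, 0 < t → t < 1 → z + t • w ∈ Ω)
    (A : E ≃ₗᵢ[ℝ] WithLp 2 (Y × ℝ)) {c : ℝ} (hc : 0 < c) (hAw : A w = WithLp.toLp 2 (0, c)) :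
    ∃ V ∈ 𝓝 p, IsRotatedSupergraphOn Y Ω V := by
  set χ := graphChart A 0
  have hseg' : ∀ z ∈ closure (χ.symm ⁻¹' Ω) ∩ χ.symm ⁻¹' U, ∀ τ : ℝ, 0 < τ → τ < c →
      (z.1, z.2 + τ) ∈ χ.symm ⁻¹' Ω := by
    rintro z ⟨hzcl, hzU⟩ τ hτ hτc
    rw [← χ.symm.preimage_closure] at hzcl
    have hshift : χ.symm (z.1, z.2 + τ) = χ.symm z + (τ / c) • w := by
      rw [χ.symm_apply_eq, graphChart_add_smul hAw, χ.apply_symm_apply,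
        div_mul_cancel₀ _ hc.ne']
    rw [mem_preimage, hshift]
    exact hseg _ ⟨hzcl, hzU⟩ _ (by positivity) ((div_lt_one hc).2 hτc)
  have hΩ' : IsOpen (χ.symm ⁻¹' Ω) := hΩ.preimage χ.symm.continuous
  obtain ⟨W, hW, a, b, hs₀, hbox⟩ := exists_upwardBox hΩ'
    (by rwa [← χ.symm.preimage_closure, mem_preimage, χ.symm_apply_apply])
    (χ.symm.continuous.continuousAt.preimage_mem_nhds (by rwa [χ.symm_apply_apply])) hc hseg'
  obtain ⟨φ, hφ, V, hV, hΩV, hfrV⟩ := hbox.exists_continuous_supergraph hΩ' hW hs₀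
  rw [← χ.symm.preimage_frontier] at hfrV
  refine ⟨χ ⁻¹' V, χ.continuous.continuousAt.preimage_mem_nhds hV, A, 0, φ, hφ, ?_, ?_⟩
  · simpa [preimage_inter, ← preimage_comp] using congrArg (χ ⁻¹' ·) hΩV
  · simpa [preimage_inter, ← preimage_comp] using congrArg (χ ⁻¹' ·) hfrV

section EuclideanSpace

variable {n : ℕ} {Ω : Set (EuclideanSpace ℝ (Fin n))}

theorem hasC0Boundary_of_isCompact_frontier (hK : IsCompact (frontier Ω))
    (h : ∀ p ∈ frontier Ω, ∃ V ∈ 𝓝 p,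
      IsRotatedSupergraphOn (EuclideanSpace ℝ (Fin (n - 1))) Ω V) :
    HasC0Boundary Ω := by
  have hball : ∀ p ∈ frontier Ω, ∃ r > 0,
      IsRotatedSupergraphOn (EuclideanSpace ℝ (Fin (n - 1))) Ω (ball p (4 * r)) := by
    intro p hp
    obtain ⟨V, hV, hΩV⟩ := h p hp
    obtain ⟨ε, hε, hεV⟩ := Metric.mem_nhds_iff.1 hV
    exact ⟨ε / 4, by positivity, hΩV.mono (by rwa [mul_div_cancel₀ _ four_ne_zero])⟩
  choose! r hr hloc using hball
  obtain ⟨t, htK, hcover⟩ := hK.elim_nhds_subcover (fun p => ball p (r p))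
    fun p hp => ball_mem_nhds p (hr p hp)
  let x : Fin t.card → EuclideanSpace ℝ (Fin n) := fun j => t.equivFin.symm j
  have hx : ∀ j, x j ∈ frontier Ω := fun j => htK _ (t.equivFin.symm j).2
  refine ⟨t.card, x, fun j => r (x j), fun j => ⟨hx j, hr _ (hx j)⟩, fun p hp => ?_,
    fun j => hloc _ (hx j)⟩
  obtain ⟨q, hq, hpq⟩ := mem_iUnion₂.1 (hcover hp)
  exact mem_iUnion.2 ⟨t.equivFin ⟨q, hq⟩, by simpa [x] using hpq⟩

theorem segmentProperty_of_hasC0Boundary (h : HasC0Boundary Ω) : SegmentProperty Ω := by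
  obtain ⟨m, x, r, hxr, hcover, hloc⟩ := h
  intro p hp
  obtain ⟨j, hj⟩ := mem_iUnion.1 (hcover hp)
  have hloc' : IsRotatedSupergraphOn (EuclideanSpace ℝ (Fin (n - 1))) Ω (ball (x j) (2 * r j)) :=
    IsRotatedSupergraphOn.mono (hloc j) (ball_subset_ball (by linarith [(hxr j).2]))
  obtain ⟨w, hw⟩ := hloc'.exists_segment
  exact ⟨ball (x j) (r j), w, isOpen_ball, hj, hw⟩

end EuclideanSpace

theorem segmentProperty_iff_hasC0Boundary_general {n : ℕ} (Ω : Set (EuclideanSpace ℝ (Fin n)))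
    (hΩopen : IsOpen Ω) (hΩbdd : Bornology.IsBounded Ω) :
    SegmentProperty Ω ↔ HasC0Boundary Ω := by
  refine ⟨fun hseg => ?_, segmentProperty_of_hasC0Boundary⟩
  refine hasC0Boundary_of_isCompact_frontier
    (hΩbdd.isCompact_closure.of_isClosed_subset isClosed_frontier frontier_subset_closure)
    fun p hp => ?_
  obtain ⟨U, w, hU, hpU, hUw⟩ := hseg p hp
  have hw : w ≠ 0 := by
    rintro rfl
    refine (hΩopen.frontier_eq ▸ hp).2 ?_
    simpa using hUw p ⟨frontier_subset_closure hp, hpU⟩ (1 / 2) (by norm_num) (by norm_num)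
  obtain ⟨A, hA⟩ := EuclideanSpace.exists_linearIsometryEquiv_apply_eq_vertical hw
  exact exists_isRotatedSupergraphOn_nhds hΩopen (frontier_subset_closure hp)
    (hU.mem_nhds hpU) hUw A (norm_pos_iff.2 hw) hA

/-- A bounded domain `Ω ⊆ ℝⁿ` has the segment property if and only if it has `C⁰`
boundary. -/
theorem segmentProperty_iff_hasC0Boundary {n : ℕ} (Ω : Set (EuclideanSpace ℝ (Fin n)))
    (hΩopen : IsOpen Ω) (hΩconn : IsConnected Ω) (hΩbdd : Bornology.IsBounded Ω) :
    SegmentProperty Ω ↔ HasC0Boundary Ω :=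
  segmentProperty_iff_hasC0Boundary_general Ω hΩopen hΩbdd
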